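/- Let G be the cycle multigraph on n ≥ 4 vertices in which every pair of consecutive vertices is joined by exactly two parallel edges. Then there exists an immersion of the complete 3-uniform hypergraph K_4^3 in G. -/

import Mathlib

/-- A finite hypergraph: a finite vertex set together with a finite multiset of
hyperedges (so multi-hyperedges are allowed), each hyperedge a subset of the vertex set. -/
structure MHypergraph (V : Type) where
  verts : Finset V
  edges : Multiset (Finset V)

/-- The vertex set spanned by a collection (multiset) of hyperedges. -/
def mVerts {V : Type} [DecidableEq V] (S : Multiset (Finset V)) : Finset V :=
  S.toFinset.sup id

/-- Reachability by a Berge path using only hyperedges from `S`. -/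
def mReach {V : Type} (S : Multiset (Finset V)) (u v : V) : Prop :=
  Relation.ReflTransGen (fun a b => ∃ f ∈ S, a ∈ f ∧ b ∈ f) u v

/-- A collection of hyperedges is connected if any two of its vertices are joined
by a Berge path within it. -/
def mConnected {V : Type} [DecidableEq V] (S : Multiset (Finset V)) : Prop :=
  ∀ u ∈ mVerts S, ∀ v ∈ mVerts S, mReach S u v

/-- An immersion of the hypergraph `H` in the hypergraph `G`: an injective map of
vertices together with an assignment (encoded by the multiset `P` of pairs) sending each
hyperedge of `H` to a nonempty connected sub-hypergraph of `G` containing the images of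
its ends, such that distinct hyperedges of `H` are mapped to edge-disjoint sub-hypergraphs
(encoded by requiring that the multiset sum of all images is contained in `G.edges`). -/
def MImmersion {V1 V2 : Type} [DecidableEq V2]
    (H : MHypergraph V1) (G : MHypergraph V2) : Prop :=
  ∃ (vmap : V1 → V2) (P : Multiset (Finset V1 × Multiset (Finset V2))),
    Set.MapsTo vmap ↑H.verts ↑G.verts ∧
    Set.InjOn vmap ↑H.verts ∧
    P.map Prod.fst = H.edges ∧
    (P.map Prod.snd).sum ≤ G.edges ∧
    ∀ p ∈ P, p.2 ≠ 0 ∧ mConnected p.2 ∧ ∀ v ∈ p.1, vmap v ∈ mVerts p.2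

/-- `G'` is a subgraph of `G`: obtained by deleting vertices and/or hyperedges. -/
def IsSubgraph {V : Type} (G' G : MHypergraph V) : Prop :=
  G'.verts ⊆ G.verts ∧ G'.edges ≤ G.edges

/-- Coalescence: merge two hyperedges sharing at least one vertex into their union. -/
def CoalStep {V : Type} [DecidableEq V] (G H : MHypergraph V) : Prop :=
  ∃ (e1 e2 : Finset V) (rest : Multiset (Finset V)),
    (e1 ∩ e2).Nonempty ∧ G.edges = e1 ::ₘ e2 ::ₘ rest ∧
    H.verts = G.verts ∧ H.edges = (e1 ∪ e2) ::ₘ rest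

/-- Dewetting: detach one vertex from a hyperedge of size at least 2. -/
def DewetStep {V : Type} [DecidableEq V] (G H : MHypergraph V) : Prop :=
  ∃ (e : Finset V) (v : V) (rest : Multiset (Finset V)),
    v ∈ e ∧ 2 ≤ e.card ∧ G.edges = e ::ₘ rest ∧
    H.verts = G.verts ∧ H.edges = (e.erase v) ::ₘ rest

/-- Hypergraph isomorphism: a bijection of vertex sets inducing a bijection of
hyperedge multisets. -/
def MIso {V1 V2 : Type} [DecidableEq V2] (G : MHypergraph V1) (H : MHypergraph V2) : Prop :=
  ∃ φ : V1 → V2, Set.BijOn φ ↑G.verts ↑H.verts ∧ H.edges = G.edges.map (Finset.image φ)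

/-- The cycle multigraph on `n` vertices in which each pair of consecutive vertices
(mod `n`) is joined by exactly two parallel edges. -/
def Cyc2 (n : ℕ) (hn : 0 < n) : MHypergraph (Fin n) where
  verts := Finset.univ
  edges :=
    Finset.univ.val.map
      (fun i : Fin n => ({i, ⟨(↑i + 1) % n, Nat.mod_lt _ hn⟩} : Finset (Fin n)))
    + Finset.univ.val.map
      (fun i : Fin n => ({i, ⟨(↑i + 1) % n, Nat.mod_lt _ hn⟩} : Finset (Fin n)))

/-- `K_4^3`: the complete 3-uniform hypergraph on 4 vertices. -/
def K43 : MHypergraph (Fin 4) :=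
  ⟨Finset.univ, {({0, 1, 2} : Finset (Fin 4)), {0, 1, 3}, {0, 2, 3}, {1, 2, 3}}⟩

/-!
Send the vertices of `K_4^3` to four consecutive vertices `0, 1, 2, 3` of the cycle. The triples
`{0,1,2}` and `{1,2,3}` are realised by the short paths `0-1-2` and `1-2-3`, the triples `{0,2,3}`
and `{0,1,3}` by the long arcs `2-3-⋯-(n-1)-0` and `3-⋯-(n-1)-0-1`. The first and third arcs
together, and likewise the second and fourth, run exactly once around the cycle, so the four arcs
use every one of the doubled edges exactly twice.
-/

section Connectivity

variable {V : Type}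

lemma mem_mVerts [DecidableEq V] {S : Multiset (Finset V)} {a : V} :
    a ∈ mVerts S ↔ ∃ e ∈ S, a ∈ e := by
  simp [mVerts, Finset.mem_sup]

namespace mReach

variable {S T : Multiset (Finset V)} {a b c : V}

lemma of_mem {e : Finset V} (he : e ∈ S) (ha : a ∈ e) (hb : b ∈ e) : mReach S a b :=
  .single ⟨e, he, ha, hb⟩

lemma trans (hab : mReach S a b) (hbc : mReach S b c) : mReach S a c :=
  Relation.ReflTransGen.trans hab hbc

lemma symm (h : mReach S a b) : mReach S b a := by
  induction h with
  | refl => exact .refl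
  | tail _ hstep ih =>
    obtain ⟨e, he, hx, hy⟩ := hstep
    exact (of_mem he hy hx).trans ih

lemma mono (hST : S ≤ T) (h : mReach S a b) : mReach T a b :=
  Relation.ReflTransGen.mono
    (fun _ _ ⟨e, he, hx, hy⟩ => ⟨e, Multiset.mem_of_le hST he, hx, hy⟩) _ _ h

end mReach

variable [DecidableEq V]

lemma mConnected_singleton (e : Finset V) : mConnected {e} := fun u hu v hv => by
  simp only [mem_mVerts, Multiset.mem_singleton, exists_eq_left] at hu hv
  exact mReach.of_mem (Multiset.mem_singleton_self e) hu hv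

lemma mConnected.add {S T : Multiset (Finset V)} (hS : mConnected S) (hT : mConnected T) {v : V}
    (hvS : v ∈ mVerts S) (hvT : v ∈ mVerts T) : mConnected (S + T) := by
  have reach_v : ∀ u ∈ mVerts (S + T), mReach (S + T) u v := by
    intro u hu
    obtain ⟨e, he, hue⟩ := mem_mVerts.1 hu
    rcases Multiset.mem_add.1 he with heS | heT
    · exact (hS u (mem_mVerts.2 ⟨e, heS, hue⟩) v hvS).mono (Multiset.le_add_right S T)
    · exact (hT u (mem_mVerts.2 ⟨e, heT, hue⟩) v hvT).mono (Multiset.le_add_left T S)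
  exact fun u hu w hw => (reach_v u hu).trans (reach_v w hw).symm

end Connectivity

namespace Cyc2

variable {n : ℕ} (hn : 0 < n)

/- Vertices and edges of the cycle are indexed by natural numbers read modulo `n`, so that an
arc may run past vertex `n - 1` back to `0`. -/

def vert (i : ℕ) : Fin n := ⟨i % n, Nat.mod_lt i hn⟩

def edge (i : ℕ) : Finset (Fin n) := {vert hn i, vert hn (i + 1)}

def arc (a k : ℕ) : Multiset (Finset (Fin n)) := (Multiset.range k).map fun j => edge hn (a + j)

lemma vert_val (i : Fin n) : vert hn i = i := Fin.ext (Nat.mod_eq_of_lt i.isLt)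

lemma vert_inj {i j : ℕ} (hi : i < n) (hj : j < n) : vert hn i = vert hn j ↔ i = j := by
  simp [vert, Fin.ext_iff, Nat.mod_eq_of_lt hi, Nat.mod_eq_of_lt hj]

lemma vert_add_self (i : ℕ) : vert hn (i + n) = vert hn i := Fin.ext (Nat.add_mod_right i n)

lemma edge_add_self (i : ℕ) : edge hn (i + n) = edge hn i := by
  rw [edge, edge, add_right_comm, vert_add_self, vert_add_self]

lemma arc_add (a k l : ℕ) : arc hn a (k + l) = arc hn a k + arc hn (a + k) l := by
  simp [arc, Multiset.range_add, Multiset.map_map, add_assoc]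

lemma arc_one (a : ℕ) : arc hn a 1 = {edge hn a} := by simp [arc]

lemma arc_ne_zero (a : ℕ) {k : ℕ} (hk : 0 < k) : arc hn a k ≠ 0 :=
  Multiset.card_pos.1 (by simpa [arc] using hk)

lemma vert_mem_mVerts_arc {a k i : ℕ} (hk : 0 < k) (hai : a ≤ i) (hik : i ≤ a + k) :
    vert hn i ∈ mVerts (arc hn a k) := by
  rw [mem_mVerts]
  rcases hik.lt_or_eq with hik | rfl
  · refine ⟨edge hn i, Multiset.mem_map.2 ⟨i - a, Multiset.mem_range.2 (by omega), ?_⟩, ?_⟩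
    · rw [Nat.add_sub_cancel' hai]
    · simp [edge]
  · refine ⟨edge hn (a + (k - 1)),
      Multiset.mem_map.2 ⟨k - 1, Multiset.mem_range.2 (by omega), rfl⟩, ?_⟩
    rw [edge, show a + (k - 1) + 1 = a + k by omega]
    simp

lemma mConnected_arc (a : ℕ) {k : ℕ} (hk : 0 < k) : mConnected (arc hn a k) := by
  induction k, hk using Nat.le_induction with
  | base => rw [arc_one]; exact mConnected_singleton _
  | succ k hk ih =>
    rw [arc_add, arc_one]
    exact ih.add (mConnected_singleton _) (vert_mem_mVerts_arc hn hk (by omega) le_rfl)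
      (by simp [mem_mVerts, edge])

/- An arc of length `n` goes once around the cycle: moving its start by one removes an edge at
one end and adds the same edge, shifted by `n`, at the other. -/
lemma arc_succ_length_self (a : ℕ) : arc hn (a + 1) n = arc hn a n := by
  have h := (arc_add hn a 1 n).symm.trans (add_comm 1 n ▸ arc_add hn a n 1)
  rwa [arc_one, arc_one, edge_add_self, add_comm (arc hn a n), add_right_inj] at h

lemma arc_length_self (a : ℕ) : arc hn a n = arc hn 0 n := by
  induction a with
  | zero => rfl
  | succ a ih => rw [arc_succ_length_self, ih]

lemma edges_eq_arc_add_arc : (Cyc2 n hn).edges = arc hn 0 n + arc hn 0 n := by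
  have h : (Finset.univ : Finset (Fin n)).val.map
      (fun i : Fin n => ({i, ⟨(↑i + 1) % n, Nat.mod_lt _ hn⟩} : Finset (Fin n))) = arc hn 0 n := by
    have edge_val : ∀ i : Fin n, edge hn i = {i, ⟨(↑i + 1) % n, Nat.mod_lt _ hn⟩} := fun i => by
      rw [edge, vert_val]; rfl
    simp_rw [← edge_val, arc, zero_add]
    rw [Fin.univ_val_map, List.ofFn_eq_map, ← Function.comp_def (edge hn) Fin.val, ← List.map_map,
      List.map_coe_finRange_eq_range]
    rfl
  exact congrArg₂ (· + ·) h h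

end Cyc2

open Cyc2 in
/-- For `n ≥ 4`, there exists an immersion of `K_4^3` in the
doubled-edge cycle multigraph on `n` vertices. -/
theorem stmt11 (n : ℕ) (hn : 4 ≤ n) : MImmersion K43 (Cyc2 n (by omega)) := by
  have hpos : 0 < n := by omega
  refine ⟨fun v => vert hpos v,
    {({0, 1, 2}, arc hpos 0 2), ({0, 1, 3}, arc hpos 3 (n - 2)), ({0, 2, 3}, arc hpos 2 (n - 2)),
      ({1, 2, 3}, arc hpos 1 2)}, fun _ _ => Finset.mem_univ _, ?_, rfl, ?_, ?_⟩
  · intro a _ b _ h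
    exact Fin.val_injective ((vert_inj hpos (a.isLt.trans_le hn) (b.isLt.trans_le hn)).1 h)
  · refine le_of_eq ?_
    calc _ = (arc hpos 0 2 + arc hpos (0 + 2) (n - 2))
          + (arc hpos 1 2 + arc hpos (1 + 2) (n - 2)) := by
          simp only [Multiset.insert_eq_cons, Multiset.map_cons, Multiset.map_singleton,
            Multiset.sum_cons, Multiset.sum_singleton, zero_add, Nat.reduceAdd]
          abel
      _ = arc hpos 0 n + arc hpos 1 n := by
          rw [← arc_add, ← arc_add, Nat.add_sub_cancel' (by omega)]
      _ = _ := by rw [arc_length_self hpos 1, edges_eq_arc_add_arc]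
  · -- the long arcs meet `0` and `1` as `n` and `n + 1`
    have h0 : vert hpos 0 = vert hpos (0 + n) := (vert_add_self _ _).symm
    have h1 : vert hpos 1 = vert hpos (1 + n) := (vert_add_self _ _).symm
    have hlen : 0 < n - 2 := by omega
    simp only [Multiset.insert_eq_cons, Multiset.mem_cons, Multiset.mem_singleton, ne_eq,
      forall_eq_or_imp, forall_eq, Finset.mem_insert, Finset.mem_singleton, Fin.isValue,
      Fin.coe_ofNat_eq_mod, Nat.zero_mod, Nat.one_mod, Nat.reduceMod, Nat.mod_succ]
    refine ⟨⟨arc_ne_zero hpos _ two_pos, mConnected_arc hpos _ two_pos, ?_, ?_, ?_⟩,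
      ⟨arc_ne_zero hpos _ hlen, mConnected_arc hpos _ hlen, ?_, ?_, ?_⟩,
      ⟨arc_ne_zero hpos _ hlen, mConnected_arc hpos _ hlen, ?_, ?_, ?_⟩,
      ⟨arc_ne_zero hpos _ two_pos, mConnected_arc hpos _ two_pos, ?_, ?_, ?_⟩⟩
    all_goals first
      | exact vert_mem_mVerts_arc hpos (by omega) (by omega) (by omega)
      | rw [h0]; exact vert_mem_mVerts_arc hpos (by omega) (by omega) (by omega)
      | rw [h1]; exact vert_mem_mVerts_arc hpos (by omega) (by omega) (by omega)
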